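/- If σ is a permutation of {1,...,n} avoiding 231 and 3124 with σ(k) = 1 for some 1 < k < n and σ(1) = n, then there exists j with 1 ≤ j ≤ k-1 such that σ = δ_j ⊖ (δ_{k-j} ⊕ σ'') for some permutation σ'' of {1,...,n-k} avoiding 231 and 3124, where δ_m denotes the decreasing permutation of length m. -/

import Mathlib

/-!
Positions and values are counted from `0`, so `σ 0 = n - 1` and the minimum `0` sits at
`p = k - 1`. Avoiding 231 with the minimum at `p` makes `σ` decrease on `[0, p]`, and no entry at
a position `a ≤ p` lies strictly between two entries at positions `l, l' > p`: with `l < l'` these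
would form a 231 `(a, l, l')`, with `l' < l` a 3124 `(a, p, l', l)`. So the prefix is a run of
entries above the whole tail (nonempty, as `σ 0` is the maximum) followed by a run below it
(containing the minimum). This block structure is exactly `δ_j ⊖ (δ_{k-j} ⊕ σ'')`, and `σ''`
avoids whatever `σ` avoids since it occurs in `σ` as a pattern.
-/

def Avoids231 {n : ℕ} (σ : Equiv.Perm (Fin n)) : Prop :=
  ¬ ∃ i j k : Fin n, i < j ∧ j < k ∧ σ k < σ i ∧ σ i < σ j

def Avoids3124 {n : ℕ} (σ : Equiv.Perm (Fin n)) : Prop :=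
  ¬ ∃ i j k l : Fin n, i < j ∧ j < k ∧ k < l ∧ σ j < σ k ∧ σ k < σ i ∧ σ i < σ l

def directSum {m n : ℕ} (π : Equiv.Perm (Fin m)) (σ : Equiv.Perm (Fin n)) :
    Equiv.Perm (Fin (m + n)) :=
  finSumFinEquiv.symm.trans ((Equiv.sumCongr π σ).trans finSumFinEquiv)

def skewSum {m n : ℕ} (π : Equiv.Perm (Fin m)) (σ : Equiv.Perm (Fin n)) :
    Equiv.Perm (Fin (m + n)) :=
  finSumFinEquiv.symm.trans (((Equiv.sumCongr π σ).trans
    (Equiv.sumComm (Fin m) (Fin n))).trans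
      (finSumFinEquiv.trans (finCongr (Nat.add_comm n m))))

def delta (m : ℕ) : Equiv.Perm (Fin m) := Fin.revPerm

open Equiv Function

section Sums

variable {m r : ℕ}

@[simp]
lemma skewSum_apply_castAdd (π : Perm (Fin m)) (ρ : Perm (Fin r)) (a : Fin m) :
    (skewSum π ρ (Fin.castAdd r a) : ℕ) = π a + r := by
  simp [skewSum]

@[simp]
lemma skewSum_apply_natAdd (π : Perm (Fin m)) (ρ : Perm (Fin r)) (b : Fin r) :
    (skewSum π ρ (Fin.natAdd m b) : ℕ) = ρ b := by
  simp [skewSum]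

@[simp]
lemma directSum_apply_castAdd (π : Perm (Fin m)) (ρ : Perm (Fin r)) (a : Fin m) :
    directSum π ρ (Fin.castAdd r a) = Fin.castAdd r (π a) := by
  simp [directSum]

@[simp]
lemma directSum_apply_natAdd (π : Perm (Fin m)) (ρ : Perm (Fin r)) (b : Fin r) :
    directSum π ρ (Fin.natAdd m b) = Fin.natAdd m (ρ b) := by
  simp [directSum]

lemma Fin.card_le_val_of_forall_lt {ι : Type*} [Fintype ι] {n : ℕ} {f : ι → Fin n}
    (hf : Injective f) {v : Fin n} (h : ∀ i, f i < v) : Fintype.card ι ≤ v :=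
  calc Fintype.card ι = (Finset.univ.image f).card :=
        (Finset.card_image_of_injective _ hf).symm
    _ ≤ (Finset.Iio v).card := Finset.card_le_card (by simpa [Finset.subset_iff] using h)
    _ = v := Fin.card_Iio v

lemma Fin.card_add_val_lt_of_forall_gt {ι : Type*} [Fintype ι] {n : ℕ} {f : ι → Fin n}
    (hf : Injective f) {v : Fin n} (h : ∀ i, v < f i) : Fintype.card ι + v < n := by
  have : Fintype.card ι ≤ n - 1 - v :=
    calc Fintype.card ι = (Finset.univ.image f).card :=
          (Finset.card_image_of_injective _ hf).symm
      _ ≤ (Finset.Ioi v).card := Finset.card_le_card (by simpa [Finset.subset_iff] using h)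
      _ = n - 1 - v := Fin.card_Ioi v
  omega

lemma exists_perm_val_add_eq {N : ℕ} {f : Fin m → Fin N} (hf : Injective f) (c : ℕ)
    (hlo : ∀ x, c ≤ f x) (hhi : ∀ x, (f x : ℕ) < c + m) :
    ∃ π : Perm (Fin m), ∀ x, (π x : ℕ) + c = f x := by
  let g : Fin m → Fin m := fun x => ⟨f x - c, by grind⟩
  have hg : Injective g := fun x y hxy => hf <| Fin.ext <| by
    have := congrArg Fin.val hxy
    grind
  exact ⟨Equiv.ofBijective g hg.bijective_of_finite, fun x => by grind⟩

lemma exists_eq_skewSum (σ : Perm (Fin (m + r)))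
    (h : ∀ a b, σ (Fin.natAdd m b) < σ (Fin.castAdd r a)) : ∃ π ρ, σ = skewSum π ρ := by
  have hl : Injective fun a => σ (Fin.castAdd r a) :=
    σ.injective.comp (Fin.castAdd_injective m r)
  have hr : Injective fun b => σ (Fin.natAdd m b) := σ.injective.comp (Fin.natAdd_injective r m)
  have hl_ge (a : Fin m) : r ≤ σ (Fin.castAdd r a) := by
    simpa using Fin.card_le_val_of_forall_lt hr (h a)
  have hr_lt (b : Fin r) : (σ (Fin.natAdd m b) : ℕ) < r := by
    simpa using Fin.card_add_val_lt_of_forall_gt hl (h · b)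
  obtain ⟨π, hπ⟩ := exists_perm_val_add_eq hl r hl_ge (by grind)
  obtain ⟨ρ, hρ⟩ := exists_perm_val_add_eq hr 0 (by simp) (by simpa using hr_lt)
  refine ⟨π, ρ, Equiv.ext fun x => Fin.ext ?_⟩
  induction x using Fin.addCases with
  | left a => simp [← hπ a]
  | right b => simp [← hρ b]

lemma exists_eq_directSum (σ : Perm (Fin (m + r)))
    (h : ∀ a b, σ (Fin.castAdd r a) < σ (Fin.natAdd m b)) : ∃ π ρ, σ = directSum π ρ := by
  have hl : Injective fun a => σ (Fin.castAdd r a) :=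
    σ.injective.comp (Fin.castAdd_injective m r)
  have hr : Injective fun b => σ (Fin.natAdd m b) := σ.injective.comp (Fin.natAdd_injective r m)
  have hl_lt (a : Fin m) : (σ (Fin.castAdd r a) : ℕ) < m := by
    have := Fin.card_add_val_lt_of_forall_gt hr (h a)
    simp at this
    omega
  have hr_ge (b : Fin r) : m ≤ σ (Fin.natAdd m b) := by
    simpa using Fin.card_le_val_of_forall_lt hl (h · b)
  obtain ⟨π, hπ⟩ := exists_perm_val_add_eq hl 0 (by simp) (by simpa using hl_lt)
  obtain ⟨ρ, hρ⟩ := exists_perm_val_add_eq hr m hr_ge (by grind)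
  refine ⟨π, ρ, Equiv.ext fun x => Fin.ext ?_⟩
  induction x using Fin.addCases with
  | left a => simp [← hπ a]
  | right b => simp [← hρ b, add_comm]

end Sums

lemma eq_delta_of_strictAnti {m : ℕ} (π : Perm (Fin m)) (h : StrictAnti π) : π = delta m := by
  have : ⇑π = Fin.rev := (h.range_inj Fin.rev_strictAnti).1 (by simp [EquivLike.range_eq_univ])
  ext x
  simp [delta, this]

section Patterns

variable {m n : ℕ} {σ : Perm (Fin n)} {τ : Perm (Fin m)}

lemma Avoids231.of_strictMono (hσ : Avoids231 σ) {e : Fin m → Fin n} (he : StrictMono e)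
    (hτ : ∀ x y, τ x < τ y → σ (e x) < σ (e y)) : Avoids231 τ := by
  rintro ⟨i, j, k, hij, hjk, hki, hij'⟩
  exact hσ ⟨e i, e j, e k, he hij, he hjk, hτ _ _ hki, hτ _ _ hij'⟩

lemma Avoids3124.of_strictMono (hσ : Avoids3124 σ) {e : Fin m → Fin n} (he : StrictMono e)
    (hτ : ∀ x y, τ x < τ y → σ (e x) < σ (e y)) : Avoids3124 τ := by
  rintro ⟨i, j, k, l, hij, hjk, hkl, hjk', hki, hil⟩
  exact hσ ⟨e i, e j, e k, e l, he hij, he hjk, he hkl, hτ _ _ hjk', hτ _ _ hki, hτ _ _ hil⟩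

lemma Avoids231.of_permCongr_finCongr (h : m = n)
    (hσ : Avoids231 ((finCongr h).permCongr τ)) : Avoids231 τ :=
  hσ.of_strictMono (e := finCongr h) (fun _ _ hxy => hxy) (by simp)

lemma Avoids3124.of_permCongr_finCongr (h : m = n)
    (hσ : Avoids3124 ((finCongr h).permCongr τ)) : Avoids3124 τ :=
  hσ.of_strictMono (e := finCongr h) (fun _ _ hxy => hxy) (by simp)

lemma Avoids231.of_skewSum (π : Perm (Fin n)) (hσ : Avoids231 (skewSum π τ)) : Avoids231 τ :=
  hσ.of_strictMono (Fin.strictMono_natAdd n) fun x y hxy => by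
    rwa [Fin.lt_def, skewSum_apply_natAdd, skewSum_apply_natAdd]

lemma Avoids3124.of_skewSum (π : Perm (Fin n)) (hσ : Avoids3124 (skewSum π τ)) :
    Avoids3124 τ :=
  hσ.of_strictMono (Fin.strictMono_natAdd n) fun x y hxy => by
    rwa [Fin.lt_def, skewSum_apply_natAdd, skewSum_apply_natAdd]

lemma Avoids231.of_directSum (π : Perm (Fin n)) (hσ : Avoids231 (directSum π τ)) :
    Avoids231 τ :=
  hσ.of_strictMono (Fin.strictMono_natAdd n) fun x y hxy => by simpa using hxy

lemma Avoids3124.of_directSum (π : Perm (Fin n)) (hσ : Avoids3124 (directSum π τ)) :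
    Avoids3124 τ :=
  hσ.of_strictMono (Fin.strictMono_natAdd n) fun x y hxy => by simpa using hxy

end Patterns

lemma exists_eq_permCongr_skewSum_delta_directSum_delta {n j i r : ℕ} (h : j + (i + r) = n)
    (σ : Perm (Fin n)) (hanti : ∀ a b : Fin n, a < b → (b : ℕ) < j + i → σ b < σ a)
    (htop : ∀ a b : Fin n, (a : ℕ) < j → j + i ≤ (b : ℕ) → σ b < σ a)
    (hbot : ∀ a b : Fin n, j ≤ (a : ℕ) → (a : ℕ) < j + i → j + i ≤ (b : ℕ) → σ a < σ b) :
    ∃ τ : Perm (Fin r),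
      σ = (finCongr h).permCongr (skewSum (delta j) (directSum (delta i) τ)) := by
  subst h
  obtain ⟨π, ρ, rfl⟩ := exists_eq_skewSum σ fun a b => by
    induction b using Fin.addCases with
    | left c => exact hanti _ _ (by simp [Fin.lt_def]; omega) (by simp)
    | right d => exact htop _ _ (by simp) (by simp)
  have hπ : π = delta j := eq_delta_of_strictAnti π fun a b hab => by
    have := hanti (Fin.castAdd _ a) (Fin.castAdd _ b) hab (by simp; omega)
    rw [Fin.lt_def, skewSum_apply_castAdd, skewSum_apply_castAdd] at this
    exact Fin.lt_def.2 (by omega)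
  obtain ⟨π', τ, rfl⟩ := exists_eq_directSum ρ fun a b => by
    have := hbot (Fin.natAdd j (Fin.castAdd r a)) (Fin.natAdd j (Fin.natAdd i b))
      (by simp) (by simp) (by simp)
    rwa [Fin.lt_def, skewSum_apply_natAdd, skewSum_apply_natAdd] at this
  have hπ' : π' = delta i := eq_delta_of_strictAnti π' fun a b hab => by
    have := hanti (Fin.natAdd j (Fin.castAdd r a)) (Fin.natAdd j (Fin.castAdd r b))
      (Fin.lt_def.2 (by simpa using Fin.lt_def.1 hab)) (by simp)
    rwa [Fin.lt_def, skewSum_apply_natAdd, skewSum_apply_natAdd, directSum_apply_castAdd,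
      directSum_apply_castAdd] at this
  subst hπ hπ'
  exact ⟨τ, rfl⟩

section MinimumPosition

variable {n : ℕ} {σ : Perm (Fin n)} {p : Fin n}

lemma lt_apply_of_val_apply_eq_zero (hp : (σ p : ℕ) = 0) {x : Fin n} (hx : x ≠ p) :
    σ p < σ x :=
  Fin.lt_def.2 <| hp ▸ Nat.pos_of_ne_zero fun h0 =>
    hx <| σ.injective <| Fin.ext (h0.trans hp.symm)

lemma Avoids231.strictAntiOn_Iic (h : Avoids231 σ) (hp : (σ p : ℕ) = 0) :
    StrictAntiOn σ (Set.Iic p) := by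
  intro a _ b hb hab
  by_contra hba
  have hab' : σ a < σ b := lt_of_le_of_ne (not_lt.1 hba) (σ.injective.ne hab.ne)
  rcases (Set.mem_Iic.1 hb).lt_or_eq with hbp | rfl
  · exact h ⟨a, b, p, hab, hbp, lt_apply_of_val_apply_eq_zero hp (hab.trans hbp).ne, hab'⟩
  · exact hba (lt_apply_of_val_apply_eq_zero hp hab.ne)

lemma Avoids3124.apply_lt_of_apply_lt (h2 : Avoids3124 σ) (h1 : Avoids231 σ)
    (hp : (σ p : ℕ) = 0) {a l l' : Fin n} (ha : a ≤ p) (hl : p < l) (hl' : p < l')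
    (hlt : σ l' < σ a) : σ l < σ a := by
  by_contra hla
  have hal : σ a < σ l := lt_of_le_of_ne (not_lt.1 hla) (σ.injective.ne (ha.trans_lt hl).ne)
  rcases lt_or_gt_of_ne (show l ≠ l' by rintro rfl; exact lt_asymm hal hlt) with hll | hll
  · exact h1 ⟨a, l, l', ha.trans_lt hl, hll, hlt, hal⟩
  · have hap : a < p := lt_of_le_of_ne ha <| by
      rintro rfl
      exact lt_asymm hlt (lt_apply_of_val_apply_eq_zero hp hl'.ne')
    exact h2 ⟨a, p, l', l, hap, hl', hll, lt_apply_of_val_apply_eq_zero hp hl'.ne', hlt, hal⟩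

end MinimumPosition

lemma exists_prefix_above_then_below_suffix {n k : ℕ} (hk1 : 1 < k) (hkn : k < n) {σ : Perm (Fin n)}
    (h1 : Avoids231 σ) (h2 : Avoids3124 σ)
    (hfirst : (σ ⟨0, Nat.zero_lt_of_lt hkn⟩ : ℕ) = n - 1)
    (hone : (σ ⟨k - 1, (Nat.sub_le k 1).trans_lt hkn⟩ : ℕ) = 0) :
    ∃ j, (1 ≤ j ∧ j ≤ k - 1) ∧
      (∀ a b : Fin n, (a : ℕ) < j → k ≤ (b : ℕ) → σ b < σ a) ∧
      (∀ a b : Fin n, j ≤ (a : ℕ) → (a : ℕ) < k → k ≤ (b : ℕ) → σ a < σ b) := by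
  classical
  obtain ⟨p, hpk, hp⟩ : ∃ p : Fin n, (p : ℕ) = k - 1 ∧ (σ p : ℕ) = 0 := ⟨_, rfl, hone⟩
  obtain ⟨q, hqk⟩ : ∃ q : Fin n, (q : ℕ) = k := ⟨⟨k, hkn⟩, rfl⟩
  have hpq : p < q := Fin.lt_def.2 (by omega)
  have hex : ∃ i, ∃ a : Fin n, (a : ℕ) = i ∧ σ a < σ q :=
    ⟨k - 1, p, hpk, lt_apply_of_val_apply_eq_zero hp hpq.ne'⟩
  obtain ⟨J, hJ, hJq⟩ := Nat.find_spec hex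
  have hjk : Nat.find hex ≤ k - 1 :=
    Nat.find_min' hex ⟨p, hpk, lt_apply_of_val_apply_eq_zero hp hpq.ne'⟩
  refine ⟨Nat.find hex, ⟨Nat.one_le_iff_ne_zero.2 fun h0 => ?_, hjk⟩,
    fun a b ha hb => ?_, fun a b hja hak hb => ?_⟩
  · have hJ0 : J = ⟨0, by omega⟩ := Fin.ext (hJ.trans h0)
    have := Fin.lt_def.1 hJq
    rw [hJ0, hfirst] at this
    have := (σ q).isLt
    omega
  · have hqa : σ q < σ a := lt_of_le_of_ne (not_lt.1 fun h => Nat.find_min hex ha ⟨a, rfl, h⟩)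
      (σ.injective.ne (Fin.ne_of_val_ne (by omega)))
    exact h2.apply_lt_of_apply_lt h1 hp (Fin.le_def.2 (by omega)) (Fin.lt_def.2 (by omega))
      hpq hqa
  · have hJa : σ a ≤ σ J := (h1.strictAntiOn_Iic hp).antitoneOn
      (Set.mem_Iic.2 (Fin.le_def.2 (by omega))) (Set.mem_Iic.2 (Fin.le_def.2 (by omega)))
      (Fin.le_def.2 (by omega))
    by_contra hba
    have hba' : σ b < σ a :=
      lt_of_le_of_ne (not_lt.1 hba) (σ.injective.ne (Fin.ne_of_val_ne (by omega)))
    exact absurd (h2.apply_lt_of_apply_lt h1 hp (Fin.le_def.2 (by omega)) hpq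
      (Fin.lt_def.2 (by omega)) hba') (not_lt.2 (hJa.trans hJq.le))

/-- If `σ` is a (231,3124)-avoiding permutation of `[n]` with `σ(1) = n` and
`σ(k) = 1` for some `1 < k < n`, then `σ = δ_j ⊖ (δ_{k-j} ⊕ σ'')` for some
`1 ≤ j ≤ k-1` and some (231,3124)-avoiding permutation `σ''` of `[n-k]`. -/
theorem stmt_19 (n k : ℕ) (hk1 : 1 < k) (hkn : k < n) (σ : Equiv.Perm (Fin n))
    (h1 : Avoids231 σ) (h2 : Avoids3124 σ)
    (hfirst : (σ ⟨0, by omega⟩ : ℕ) = n - 1)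
    (hone : (σ ⟨k - 1, by omega⟩ : ℕ) = 0) :
    ∃ (j : ℕ) (hj : 1 ≤ j ∧ j ≤ k - 1) (σ'' : Equiv.Perm (Fin (n - k))),
      Avoids231 σ'' ∧ Avoids3124 σ'' ∧
        σ = (finCongr (show j + ((k - j) + (n - k)) = n by omega)).permCongr
              (skewSum (delta j) (directSum (delta (k - j)) σ'')) := by
  obtain ⟨j, hj, htop, hbot⟩ := exists_prefix_above_then_below_suffix hk1 hkn h1 h2 hfirst hone
  have hanti := h1.strictAntiOn_Iic hone
  obtain ⟨τ, hτ⟩ := exists_eq_permCongr_skewSum_delta_directSum_delta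
    (show j + ((k - j) + (n - k)) = n by omega) σ
    (fun a b hab hb => hanti (Set.mem_Iic.2 (Fin.le_def.2 (by simp; omega)))
      (Set.mem_Iic.2 (Fin.le_def.2 (by simp; omega))) hab)
    (fun a b ha hb => htop a b ha (by omega))
    (fun a b ha ha' hb => hbot a b ha (by omega) (by omega))
  rw [hτ] at h1 h2
  exact ⟨j, hj, τ, ((h1.of_permCongr_finCongr _).of_skewSum _).of_directSum _,
    ((h2.of_permCongr_finCongr _).of_skewSum _).of_directSum _, hτ⟩
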